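/- arXiv:2509.05610 — 3 statements merged into one kernel-verified Lean document; each statement's English description precedes it below -/
import Mathlib

section
/- Let Θ ⊆ ℝ be bounded, let g₀ be a probability measure on Θ supported on exactly J points, and let g be any probability measure on Θ. Fix θ₀ ∈ Θ and set M := sup_{θ∈Θ} |θ−θ₀|, m_{k,g} := ∫ (θ−θ₀)^k dg(θ), and Δ_g := max_{1≤k≤2J} |m_{k,g} − m_{k,g₀}|. Then for every integer k > 2J, |m_{k,g} − m_{k,g₀}| ≤ k (M+1)^{2Jk} Δ_g. -/
open MeasureTheory Polynomial Finset

/-!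
Put `y = θ - θ₀` and `P(y) = ∏_{s ∈ S} (y - (s - θ₀))²`: a monic polynomial of degree `2J`,
nonnegative, vanishing on the support of `g₀`, whose coefficients `a_i` satisfy
`∑ |a_i| ≤ (M + 1)^(2J)` (compare with `∏ (y + |s - θ₀|)²` at `y = 1`). With
`d_n = m_{n,g} - m_{n,g₀}`, for every `t` we get `∑ a_i d_{i+t} = ∫ P(y) y^t dg`, and positivity of
`P` bounds this by `M^t ∫ P dg = M^t ∑ a_i d_i ≤ M^t (M + 1)^(2J) Δ`. As `a_{2J} = 1`, this
controls `d_{2J+t}` by the lower differences, and strong induction gives `|d_n| ≤ n (M+1)^(2Jn) Δ`.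
-/

theorem Polynomial.eval_prod_X_sub_C_of_mem {R : Type*} [CommRing R] {s : Multiset R} {c : R}
    (hc : c ∈ s) : ((s.map fun t => X - C t).prod).eval c = 0 := by
  rw [eval_multiset_prod]
  exact Multiset.prod_eq_zero
    (Multiset.mem_map.mpr ⟨X - C c, Multiset.mem_map_of_mem _ hc, by simp⟩)

section Polynomial

variable {R : Type*} [CommRing R] [LinearOrder R] [IsStrictOrderedRing R]

theorem Multiset.abs_esymm_le (s : Multiset R) (n : ℕ) :
    |s.esymm n| ≤ (s.map abs).esymm n := by
  rw [Multiset.esymm, Multiset.esymm, Multiset.powersetCard_map, Multiset.map_map]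
  refine Multiset.abs_sum_le_sum_abs.trans_eq ?_
  rw [Multiset.map_map]
  exact congrArg _ (Multiset.map_congr rfl fun t _ => map_multiset_prod absHom t)

theorem Polynomial.abs_coeff_prod_X_sub_C_le (s : Multiset R) {k : ℕ}
    (hk : k ≤ Multiset.card s) :
    |(s.map fun t => X - C t).prod.coeff k| ≤ (s.map fun t => X + C |t|).prod.coeff k := by
  rw [Multiset.prod_X_sub_C_coeff s hk, Multiset.prod_X_add_C_coeff' s abs hk, abs_mul,
    abs_pow, abs_neg, abs_one, one_pow, one_mul]
  exact s.abs_esymm_le _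

theorem Polynomial.sum_abs_coeff_prod_X_sub_C_le (s : Multiset R) {M : R}
    (hM : ∀ t ∈ s, |t| ≤ M) :
    ∑ k ∈ range (Multiset.card s + 1), |(s.map fun t => X - C t).prod.coeff k|
      ≤ (1 + M) ^ Multiset.card s := by
  have hdeg : (s.map fun t => X + C |t|).prod.natDegree = Multiset.card s := by
    rw [natDegree_multiset_prod_of_monic _ fun f hf => ?_]
    · simp [Multiset.map_map]
    · obtain ⟨t, -, rfl⟩ := Multiset.mem_map.mp hf
      exact monic_X_add_C _
  calc _ ≤ ∑ k ∈ range (Multiset.card s + 1), (s.map fun t => X + C |t|).prod.coeff k := by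
        gcongr with k hk
        exact abs_coeff_prod_X_sub_C_le s (Nat.lt_succ_iff.mp (mem_range.mp hk))
    _ = (s.map fun t => X + C |t|).prod.eval 1 := by
        rw [eval_eq_sum_range, hdeg]
        simp
    _ = (s.map fun t => 1 + |t|).prod := by simp [eval_multiset_prod, Multiset.map_map, add_comm]
    _ ≤ (s.map fun _ => 1 + M).prod :=
        Multiset.prod_map_le_prod_map₀ _ _ (fun t _ => by positivity)
          fun t ht => add_le_add_right (hM t ht) 1
    _ = (1 + M) ^ Multiset.card s := by simp

theorem Polynomial.eval_prod_X_sub_C_add_self_nonneg (s : Multiset R) (y : R) :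
    0 ≤ ((s + s).map fun t => X - C t).prod.eval y := by
  rw [Multiset.map_add, Multiset.prod_add, eval_mul]
  exact mul_self_nonneg _

end Polynomial

theorem abs_sum_mul_le_sum_abs_mul {ι : Type*} (s : Finset ι) (a d : ι → ℝ) {B : ℝ}
    (hd : ∀ i ∈ s, |d i| ≤ B) : |∑ i ∈ s, a i * d i| ≤ (∑ i ∈ s, |a i|) * B := by
  rw [sum_mul]
  refine (abs_sum_le_sum_abs _ _).trans (sum_le_sum fun i hi => ?_)
  rw [abs_mul]
  exact mul_le_mul_of_nonneg_left (hd i hi) (abs_nonneg _)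

theorem abs_le_of_monic_shift_bound {a d : ℕ → ℝ} {D : ℕ} {M Δ : ℝ} (hD : 0 < D) (hM : 0 ≤ M)
    (haD : a D = 1) (ha : ∑ i ∈ range (D + 1), |a i| ≤ (M + 1) ^ D)
    (hd : ∀ i ≤ D, |d i| ≤ Δ)
    (hshift : ∀ t, |∑ i ∈ range (D + 1), a i * d (i + t)| ≤ M ^ t * ∑ i ∈ range (D + 1), a i * d i)
    {n : ℕ} (hn : 0 < n) : |d n| ≤ n * (M + 1) ^ (D * n) * Δ := by
  have hΔ : 0 ≤ Δ := (abs_nonneg _).trans (hd 0 (Nat.zero_le _))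
  have hM1 : 1 ≤ M + 1 := by linarith
  have hmono : Monotone fun n : ℕ => (n : ℝ) * (M + 1) ^ (D * n) * Δ := fun i j hij => by
    dsimp only
    gcongr
  have hsum : ∑ i ∈ range (D + 1), a i * d i ≤ (M + 1) ^ D * Δ :=
    (le_abs_self _).trans <| (abs_sum_mul_le_sum_abs_mul _ a d fun i hi =>
      hd i (Nat.lt_succ_iff.mp (mem_range.mp hi))).trans (mul_le_mul_of_nonneg_right ha hΔ)
  induction n using Nat.strong_induction_on with
  | _ n ih =>
  rcases le_or_gt n D with hnD | hDn
  · calc |d n| ≤ Δ := hd n hnD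
      _ = (1 : ℕ) * (M + 1) ^ (D * 0) * Δ := by simp
      _ ≤ n * (M + 1) ^ (D * n) * Δ := by gcongr; omega
  obtain ⟨t, rfl⟩ : ∃ t, n = t + 1 + D := ⟨n - D - 1, by omega⟩
  have hsplit : d (t + 1 + D) = ∑ i ∈ range (D + 1), a i * d (i + (t + 1))
      - ∑ i ∈ range D, a i * d (i + (t + 1)) := by
    rw [sum_range_succ, haD, one_mul, add_comm D]; ring
  have hhead : |∑ i ∈ range (D + 1), a i * d (i + (t + 1))| ≤ (M + 1) ^ (D * (t + 1 + D)) * Δ :=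
    calc _ ≤ M ^ (t + 1) * ((M + 1) ^ D * Δ) := (hshift _).trans (by gcongr)
      _ ≤ (M + 1) ^ (t + 1) * (M + 1) ^ D * Δ := by rw [← mul_assoc]; gcongr; linarith
      _ ≤ (M + 1) ^ (D * (t + 1 + D)) * Δ := by
        rw [← pow_add]; gcongr
        exact Nat.le_mul_of_pos_left _ hD
  have htail : |∑ i ∈ range D, a i * d (i + (t + 1))|
      ≤ (t + D : ℕ) * (M + 1) ^ (D * (t + 1 + D)) * Δ :=
    calc _ ≤ (∑ i ∈ range D, |a i|) * ((t + D : ℕ) * (M + 1) ^ (D * (t + D)) * Δ) :=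
          abs_sum_mul_le_sum_abs_mul _ a _ fun i hi =>
            (ih _ (by have := mem_range.mp hi; omega) (by omega)).trans
              (hmono (by have := mem_range.mp hi; omega))
      _ ≤ (M + 1) ^ D * ((t + D : ℕ) * (M + 1) ^ (D * (t + D)) * Δ) := by
          gcongr
          exact (sum_le_sum_of_subset_of_nonneg (range_mono (Nat.le_succ D))
            fun _ _ _ => abs_nonneg _).trans ha
      _ = (t + D : ℕ) * (M + 1) ^ (D * (t + 1 + D)) * Δ := by ring
  calc |d (t + 1 + D)|
      _ ≤ (M + 1) ^ (D * (t + 1 + D)) * Δ + (t + D : ℕ) * (M + 1) ^ (D * (t + 1 + D)) * Δ := by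
        rw [hsplit]; exact (abs_sub _ _).trans (add_le_add hhead htail)
      _ = (t + 1 + D : ℕ) * (M + 1) ^ (D * (t + 1 + D)) * Δ := by push_cast; ring

section Moments

variable {α : Type*} [MeasurableSpace α] {ν : Measure α} {f : α → ℝ}

theorem integrable_pow_of_ae_abs_le [IsFiniteMeasure ν] {M : ℝ} (hf : AEStronglyMeasurable f ν)
    (hfM : ∀ᵐ x ∂ν, |f x| ≤ M) (n : ℕ) : Integrable (fun x => f x ^ n) ν :=
  Integrable.of_bound (hf.pow n) (M ^ n) <| by
    filter_upwards [hfM] with x hx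
    rw [norm_pow, Real.norm_eq_abs]
    exact pow_le_pow_left₀ (abs_nonneg _) hx n

theorem integrable_eval_comp (p : ℝ[X]) (hf : ∀ n, Integrable (fun x => f x ^ n) ν) :
    Integrable (fun x => p.eval (f x)) ν := by
  simp_rw [eval_eq_sum_range]
  exact integrable_finsetSum _ fun i _ => (hf i).const_mul _

theorem integral_eval_mul_pow (p : ℝ[X]) (hf : ∀ n, Integrable (fun x => f x ^ n) ν) (t : ℕ) :
    ∫ x, p.eval (f x) * f x ^ t ∂ν
      = ∑ i ∈ range (p.natDegree + 1), p.coeff i * ∫ x, f x ^ (i + t) ∂ν := by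
  simp_rw [eval_eq_sum_range, sum_mul, mul_assoc, ← pow_add]
  rw [integral_finsetSum _ fun i _ => (hf _).const_mul _]
  simp_rw [integral_const_mul]

theorem abs_integral_eval_mul_pow_le {p : ℝ[X]} {M : ℝ} (hf : ∀ n, Integrable (fun x => f x ^ n) ν)
    (hp : ∀ᵐ x ∂ν, 0 ≤ p.eval (f x)) (hfM : ∀ᵐ x ∂ν, |f x| ≤ M) (t : ℕ) :
    |∫ x, p.eval (f x) * f x ^ t ∂ν| ≤ M ^ t * ∫ x, p.eval (f x) ∂ν := by
  rw [← integral_const_mul]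
  refine abs_integral_le_integral_abs.trans <| integral_mono_of_nonneg
    (.of_forall fun x => abs_nonneg _) ((integrable_eval_comp p hf).const_mul _) ?_
  filter_upwards [hp, hfM] with x hpx hx
  rw [abs_mul, abs_of_nonneg hpx, abs_pow, mul_comm]
  gcongr

theorem abs_sum_coeff_mul_moment_sub_le {ν₀ : Measure α} {p : ℝ[X]} {M : ℝ}
    (hf : ∀ n, Integrable (fun x => f x ^ n) ν) (hf₀ : ∀ n, Integrable (fun x => f x ^ n) ν₀)
    (hp : ∀ᵐ x ∂ν, 0 ≤ p.eval (f x)) (hp₀ : ∀ᵐ x ∂ν₀, p.eval (f x) = 0)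
    (hfM : ∀ᵐ x ∂ν, |f x| ≤ M) (t : ℕ) :
    |∑ i ∈ range (p.natDegree + 1),
        p.coeff i * (∫ x, f x ^ (i + t) ∂ν - ∫ x, f x ^ (i + t) ∂ν₀)|
      ≤ M ^ t * ∑ i ∈ range (p.natDegree + 1),
        p.coeff i * (∫ x, f x ^ i ∂ν - ∫ x, f x ^ i ∂ν₀) := by
  have hrepr : ∀ t, ∑ i ∈ range (p.natDegree + 1),
      p.coeff i * (∫ x, f x ^ (i + t) ∂ν - ∫ x, f x ^ (i + t) ∂ν₀)
        = ∫ x, p.eval (f x) * f x ^ t ∂ν := fun t => by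
    have hvanish : ∫ x, p.eval (f x) * f x ^ t ∂ν₀ = 0 :=
      integral_eq_zero_of_ae (by filter_upwards [hp₀] with x hx; simp [hx])
    simp_rw [mul_sub, sum_sub_distrib, ← integral_eval_mul_pow p hf, ← integral_eval_mul_pow p hf₀,
      hvanish, sub_zero]
  have hrepr₀ := hrepr 0
  simp only [add_zero, pow_zero, mul_one] at hrepr₀
  rw [hrepr, hrepr₀]
  exact abs_integral_eval_mul_pow_le hf hp hfM t

end Moments

theorem abs_sub_le_sSup_image {Θ : Set ℝ} (hΘ : Bornology.IsBounded Θ) (θ₀ : ℝ) {θ : ℝ}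
    (hθ : θ ∈ Θ) : |θ - θ₀| ≤ sSup ((fun θ => |θ - θ₀|) '' Θ) := by
  obtain ⟨r, hr⟩ := hΘ.subset_closedBall θ₀
  exact le_csSup ⟨r, by rintro _ ⟨θ', hθ', rfl⟩; exact hr hθ'⟩ ⟨θ, hθ, rfl⟩

theorem stmt_0 (Θ : Set ℝ) (hΘ : Bornology.IsBounded Θ)
    (g g₀ : Measure ℝ) [IsProbabilityMeasure g] [IsProbabilityMeasure g₀]
    (hg : g Θᶜ = 0)
    (J : ℕ) (hJ : 1 ≤ J)
    (S : Finset ℝ) (hScard : S.card = J) (hSΘ : ↑S ⊆ Θ)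
    (hg₀S : g₀ (↑S : Set ℝ)ᶜ = 0)
    (θ₀ : ℝ) (hθ₀ : θ₀ ∈ Θ)
    (M : ℝ) (hM : M = sSup ((fun θ => |θ - θ₀|) '' Θ))
    (m : ℕ → Measure ℝ → ℝ) (hm : ∀ k ν, m k ν = ∫ θ, (θ - θ₀) ^ k ∂ν)
    (Δ : ℝ)
    (hΔ : Δ = (Finset.Icc 1 (2 * J)).sup' (Finset.nonempty_Icc.mpr (by omega))
      (fun k => |m k g - m k g₀|))
    (k : ℕ) (hk : 2 * J < k) :
    |m k g - m k g₀| ≤ (k : ℝ) * (M + 1) ^ (2 * J * k) * Δ := by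
  have hMΘ : ∀ θ ∈ Θ, |θ - θ₀| ≤ M := fun θ hθ => hM ▸ abs_sub_le_sSup_image hΘ θ₀ hθ
  have hgM : ∀ᵐ θ ∂g, |θ - θ₀| ≤ M := (ae_iff.mpr hg : ∀ᵐ θ ∂g, θ ∈ Θ).mono hMΘ
  have hg₀S' : ∀ᵐ θ ∂g₀, θ ∈ (S : Set ℝ) := ae_iff.mpr hg₀S
  have hint := integrable_pow_of_ae_abs_le (by fun_prop) hgM
  have hint₀ := integrable_pow_of_ae_abs_le (by fun_prop)
    (hg₀S'.mono fun θ hθ => hMΘ θ (hSΘ hθ))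
  set s := S.val.map (· - θ₀)
  set P : ℝ[X] := ((s + s).map fun c => X - C c).prod
  have hPcard : P.natDegree = Multiset.card (s + s) := natDegree_multiset_prod_X_sub_C_eq_card _
  have hPdeg : P.natDegree = 2 * J := by simp [hPcard, s, hScard, two_mul]
  have hPmonic : P.coeff P.natDegree = 1 :=
    (monic_multiset_prod_of_monic _ _ fun c _ => monic_X_sub_C c).coeff_natDegree
  have hPcoeff : ∑ i ∈ range (P.natDegree + 1), |P.coeff i| ≤ (M + 1) ^ P.natDegree := by
    rw [hPcard, add_comm M]
    refine sum_abs_coeff_prod_X_sub_C_le (s + s) fun t ht => ?_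
    obtain ⟨θ, hθ, rfl⟩ := Multiset.mem_map.mp ((Multiset.mem_add.mp ht).elim id id)
    exact hMΘ θ (hSΘ hθ)
  have hPzero : ∀ᵐ θ ∂g₀, P.eval (θ - θ₀) = 0 := hg₀S'.mono fun θ hθ =>
    eval_prod_X_sub_C_of_mem (Multiset.mem_add.mpr (Or.inl (Multiset.mem_map_of_mem _ hθ)))
  have hmoment : ∀ i, 1 ≤ i → i ≤ 2 * J → |m i g - m i g₀| ≤ Δ := fun i h1 h2 =>
    hΔ ▸ le_sup' (fun i => |m i g - m i g₀|) (mem_Icc.mpr ⟨h1, h2⟩)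
  have hd : ∀ i ≤ P.natDegree, |m i g - m i g₀| ≤ Δ := by
    rintro (_ | i) hi
    · simpa [hm] using (abs_nonneg _).trans (hmoment 1 le_rfl (by omega))
    · exact hmoment _ (by omega) (hPdeg ▸ hi)
  have hshift : ∀ t, |∑ i ∈ range (P.natDegree + 1), P.coeff i * (m (i + t) g - m (i + t) g₀)|
      ≤ M ^ t * ∑ i ∈ range (P.natDegree + 1), P.coeff i * (m i g - m i g₀) := fun t => by
    simpa only [hm] using abs_sum_coeff_mul_moment_sub_le hint hint₀
      (.of_forall fun θ => eval_prod_X_sub_C_add_self_nonneg s _) hPzero hgM t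
  have := abs_le_of_monic_shift_bound (by omega) ((abs_nonneg _).trans (hMΘ θ₀ hθ₀))
    hPmonic hPcoeff hd hshift (n := k) (by omega)
  rwa [hPdeg] at this
end

section
/- Let Θ ⊆ ℝ be bounded, θ₀ ∈ Θ, M := sup_{θ∈Θ}|θ−θ₀|, and let g₀ be a probability measure supported on the points θ₁,…,θ_J ∈ Θ. For any probability measure g on Θ and any integer k > 2J, the inequality |∫ (θ−θ₀)^{k−2J} ∏_{j=1}^J (θ−θ_j)² d(g−g₀)(θ)| ≤ (M+1)^{2J} M^{k−2J} Δ_g holds, where Δ_g := max_{1≤j≤2J} |∫ (θ−θ₀)^j d(g−g₀)(θ)|. -/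
open MeasureTheory Polynomial

lemma integrable_of_bdd_support {Θ : Set ℝ} (hΘ : Bornology.IsBounded Θ)
    (μ : Measure ℝ) [IsFiniteMeasure μ] (hμ : μ Θᶜ = 0)
    (f : ℝ → ℝ) (hf : Continuous f) : Integrable f μ := by
  obtain ⟨C, hC⟩ := hΘ.isCompact_closure.exists_bound_of_continuousOn hf.continuousOn
  refine (integrable_const C).mono' hf.aestronglyMeasurable ?_
  have hae : ∀ᵐ θ ∂μ, θ ∈ Θ := mem_ae_iff.mpr hμ
  filter_upwards [hae] with θ hθ
  exact hC θ (subset_closure hθ)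

theorem stmt_2 (Θ : Set ℝ) (hΘ : Bornology.IsBounded Θ)
    (θ₀ : ℝ) (hθ₀ : θ₀ ∈ Θ)
    (M : ℝ) (hM : M = sSup ((fun θ => |θ - θ₀|) '' Θ))
    (J : ℕ) (hJ : 1 ≤ J) (t : Fin J → ℝ) (ht : ∀ j, t j ∈ Θ)
    (g g₀ : Measure ℝ) [IsProbabilityMeasure g] [IsProbabilityMeasure g₀]
    (hg : g Θᶜ = 0) (hg₀ : g₀ (Set.range t)ᶜ = 0)
    (Δ : ℝ)
    (hΔ : Δ = (Finset.Icc 1 (2 * J)).sup' (Finset.nonempty_Icc.mpr (by omega))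
      (fun j => |(∫ θ, (θ - θ₀) ^ j ∂g) - ∫ θ, (θ - θ₀) ^ j ∂g₀|))
    (k : ℕ) (hk : 2 * J < k) :
    |(∫ θ, (θ - θ₀) ^ (k - 2 * J) * ∏ j, (θ - t j) ^ 2 ∂g)
      - ∫ θ, (θ - θ₀) ^ (k - 2 * J) * ∏ j, (θ - t j) ^ 2 ∂g₀|
      ≤ (M + 1) ^ (2 * J) * M ^ (k - 2 * J) * Δ := by
  set n := 2 * J with hn
  set d := k - n with hdd
  set P : ℝ → ℝ := fun θ => ∏ j, (θ - t j) ^ 2 with hPdef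
  -- basic bounds
  have hMmem : ∀ θ ∈ Θ, |θ - θ₀| ≤ M := by
    intro θ hθ
    rw [hM]
    apply le_csSup
    · obtain ⟨r, hr⟩ := hΘ.subset_closedBall θ₀
      refine ⟨r, ?_⟩
      rintro x ⟨y, hy, rfl⟩
      simpa [Real.dist_eq] using hr hy
    · exact ⟨θ, hθ, rfl⟩
  have hM0 : 0 ≤ M := le_trans (by simp) (hMmem θ₀ hθ₀)
  have hΔ0 : 0 ≤ Δ := by
    have h1 : |(∫ θ, (θ - θ₀) ^ 1 ∂g) - ∫ θ, (θ - θ₀) ^ 1 ∂g₀| ≤ Δ := by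
      rw [hΔ]
      exact Finset.le_sup' (fun j => |(∫ θ, (θ - θ₀) ^ j ∂g) - ∫ θ, (θ - θ₀) ^ j ∂g₀|)
        (Finset.mem_Icc.mpr ⟨le_refl 1, by omega⟩)
    exact le_trans (abs_nonneg _) h1
  -- support facts
  have hg₀Θ : g₀ Θᶜ = 0 :=
    measure_mono_null (Set.compl_subset_compl.mpr (Set.range_subset_iff.mpr ht)) hg₀
  have haeg : ∀ᵐ θ ∂g, θ ∈ Θ := mem_ae_iff.mpr hg
  have haeg₀ : ∀ᵐ θ ∂g₀, θ ∈ Set.range t := mem_ae_iff.mpr hg₀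
  -- P basic facts
  have hPc : Continuous P := continuous_finset_prod _ (fun j _ => by fun_prop)
  have hPnn : ∀ θ, 0 ≤ P θ := fun θ => Finset.prod_nonneg fun j _ => sq_nonneg _
  have hPz : ∀ j, P (t j) = 0 := fun j =>
    Finset.prod_eq_zero (Finset.mem_univ j) (by simp)
  -- the polynomial
  set p : Polynomial ℝ := ∏ l : Fin J × Fin 2, (X + C (θ₀ - t l.1)) with hp
  have hcard : (Finset.univ : Finset (Fin J × Fin 2)).card = n := by
    simp [hn]; ring
  have hpdeg : p.natDegree = n := by
    rw [hp, natDegree_prod _ _ (fun l _ => X_add_C_ne_zero _)]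
    simp only [natDegree_X_add_C, Finset.sum_const, smul_eq_mul, mul_one]
    exact hcard
  have hpeval : ∀ x : ℝ, p.eval x = ∏ j, (x + θ₀ - t j) ^ 2 := by
    intro x
    rw [hp, eval_prod, Fintype.prod_prod_type]
    refine Finset.prod_congr rfl fun j _ => ?_
    simp [Finset.prod_const, sq]
    ring
  have hPsum : ∀ θ : ℝ, P θ = ∑ i ∈ Finset.range (n + 1), p.coeff i * (θ - θ₀) ^ i := by
    intro θ
    have h1 : P θ = p.eval (θ - θ₀) := by
      rw [hpeval]
      exact Finset.prod_congr rfl fun j _ => by ring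
    rw [h1, eval_eq_sum_range, hpdeg]
  have hcoeff : ∀ i ∈ Finset.range (n + 1),
      |p.coeff i| ≤ (n.choose i : ℝ) * M ^ (n - i) := by
    intro i hi
    rw [Finset.mem_range] at hi
    have hin : i ≤ n := by omega
    have hle : i ≤ (Finset.univ : Finset (Fin J × Fin 2)).card := by rw [hcard]; exact hin
    rw [hp, Finset.prod_X_add_C_coeff Finset.univ _ hle, hcard]
    refine le_trans (Finset.abs_sum_le_sum_abs _ _) ?_
    have hb : ∀ s ∈ Finset.powersetCard (n - i) (Finset.univ : Finset (Fin J × Fin 2)),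
        |∏ l ∈ s, (θ₀ - t l.1)| ≤ M ^ (n - i) := by
      intro s hs
      have hsc : s.card = n - i := (Finset.mem_powersetCard.mp hs).2
      rw [Finset.abs_prod]
      have hMt : ∀ j : Fin J, |θ₀ - t j| ≤ M := fun j => by
        rw [abs_sub_comm]; exact hMmem _ (ht j)
      refine le_trans (Finset.prod_le_prod (fun l _ => abs_nonneg _)
        (fun l _ => hMt l.1)) ?_
      rw [Finset.prod_const, hsc]
    refine le_trans (Finset.sum_le_sum hb) ?_
    rw [Finset.sum_const, Finset.card_powersetCard, hcard, nsmul_eq_mul, Nat.choose_symm hin]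
  -- moment differences
  have hmom : ∀ i ∈ Finset.range (n + 1),
      |(∫ θ, (θ - θ₀) ^ i ∂g) - ∫ θ, (θ - θ₀) ^ i ∂g₀| ≤ Δ := by
    intro i hi
    rw [Finset.mem_range] at hi
    rcases Nat.eq_zero_or_pos i with h0 | h0
    · subst h0
      simpa using hΔ0
    · rw [hΔ]
      exact Finset.le_sup' (fun j => |(∫ θ, (θ - θ₀) ^ j ∂g) - ∫ θ, (θ - θ₀) ^ j ∂g₀|)
        (Finset.mem_Icc.mpr ⟨h0, by omega⟩)
  -- integrability
  have hint : ∀ (f : ℝ → ℝ), Continuous f → Integrable f g ∧ Integrable f g₀ :=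
    fun f hf => ⟨integrable_of_bdd_support hΘ g hg f hf,
      integrable_of_bdd_support hΘ g₀ hg₀Θ f hf⟩
  have hfc : Continuous (fun θ : ℝ => (θ - θ₀) ^ d * P θ) := by
    exact (by fun_prop : Continuous fun θ : ℝ => (θ - θ₀) ^ d).mul hPc
  -- vanishing g₀ integrals
  have hfP0 : ∫ θ, P θ ∂g₀ = 0 := by
    refine integral_eq_zero_of_ae ?_
    filter_upwards [haeg₀] with θ hθ
    obtain ⟨j, rfl⟩ := hθ
    exact hPz j
  have h0 : ∫ θ, (θ - θ₀) ^ d * P θ ∂g₀ = 0 := by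
    refine integral_eq_zero_of_ae ?_
    filter_upwards [haeg₀] with θ hθ
    obtain ⟨j, rfl⟩ := hθ
    simp [hPz j]
  -- moment expansion of ∫ P
  have hexp : ∀ (μ : Measure ℝ), IsProbabilityMeasure μ → μ Θᶜ = 0 →
      ∫ θ, P θ ∂μ = ∑ i ∈ Finset.range (n + 1), p.coeff i * ∫ θ, (θ - θ₀) ^ i ∂μ := by
    intro μ hμp hμ
    haveI := hμp
    calc ∫ θ, P θ ∂μ
        = ∫ θ, ∑ i ∈ Finset.range (n + 1), p.coeff i * (θ - θ₀) ^ i ∂μ := by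
          exact integral_congr_ae (Filter.Eventually.of_forall fun θ => hPsum θ)
      _ = ∑ i ∈ Finset.range (n + 1), ∫ θ, p.coeff i * (θ - θ₀) ^ i ∂μ := by
          refine integral_finset_sum _ fun i _ => ?_
          exact (integrable_of_bdd_support hΘ μ hμ _ (by fun_prop)).const_mul _
      _ = ∑ i ∈ Finset.range (n + 1), p.coeff i * ∫ θ, (θ - θ₀) ^ i ∂μ := by
          simp [integral_const_mul]
  -- key bound on ∫ P dg
  have hkey : |(∫ θ, P θ ∂g) - ∫ θ, P θ ∂g₀| ≤ (M + 1) ^ n * Δ := by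
    rw [hexp g ‹_› hg, hexp g₀ ‹_› hg₀Θ, ← Finset.sum_sub_distrib]
    simp_rw [← mul_sub]
    calc |∑ i ∈ Finset.range (n + 1),
            p.coeff i * ((∫ θ, (θ - θ₀) ^ i ∂g) - ∫ θ, (θ - θ₀) ^ i ∂g₀)|
        ≤ ∑ i ∈ Finset.range (n + 1),
            |p.coeff i| * |(∫ θ, (θ - θ₀) ^ i ∂g) - ∫ θ, (θ - θ₀) ^ i ∂g₀| := by
          refine le_trans (Finset.abs_sum_le_sum_abs _ _) ?_
          refine Finset.sum_le_sum fun i _ => ?_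
          rw [abs_mul]
      _ ≤ ∑ i ∈ Finset.range (n + 1), ((n.choose i : ℝ) * M ^ (n - i)) * Δ := by
          refine Finset.sum_le_sum fun i hi => ?_
          exact mul_le_mul (hcoeff i hi) (hmom i hi) (abs_nonneg _)
            (by positivity)
      _ = (M + 1) ^ n * Δ := by
          rw [← Finset.sum_mul]
          congr 1
          rw [show (M + 1 : ℝ) ^ n = (1 + M) ^ n by ring, add_pow]
          exact Finset.sum_congr rfl fun i hi => by ring
  -- main chain
  have habs : |∫ θ, (θ - θ₀) ^ d * P θ ∂g| ≤ ∫ θ, |(θ - θ₀) ^ d * P θ| ∂g := by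
    simpa only [Real.norm_eq_abs] using
      norm_integral_le_integral_norm (μ := g) (fun θ : ℝ => (θ - θ₀) ^ d * P θ)
  calc |(∫ θ, (θ - θ₀) ^ d * P θ ∂g) - ∫ θ, (θ - θ₀) ^ d * P θ ∂g₀|
      = |∫ θ, (θ - θ₀) ^ d * P θ ∂g| := by rw [h0, sub_zero]
    _ ≤ ∫ θ, |(θ - θ₀) ^ d * P θ| ∂g := habs
    _ ≤ ∫ θ, M ^ d * P θ ∂g := by
        refine integral_mono_ae ((hint _ hfc).1.abs) (((hint P hPc).1).const_mul _) ?_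
        filter_upwards [haeg] with θ hθ
        rw [abs_mul, abs_of_nonneg (hPnn θ), abs_pow]
        exact mul_le_mul_of_nonneg_right
          (pow_le_pow_left₀ (abs_nonneg _) (hMmem θ hθ) d) (hPnn θ)
    _ = M ^ d * ((∫ θ, P θ ∂g) - ∫ θ, P θ ∂g₀) := by
        rw [integral_const_mul, hfP0, sub_zero]
    _ ≤ M ^ d * ((M + 1) ^ n * Δ) := by
        refine mul_le_mul_of_nonneg_left ?_ (pow_nonneg hM0 d)
        exact le_trans (le_abs_self _) hkey
    _ = (M + 1) ^ n * M ^ d * Δ := by ring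
end

section
/- Let (Ω, μ) be a measure space, f₀ a probability density with respect to μ, and (s_n) a sequence of measurable functions with ∫ s_n f₀ dμ = 0 and ∫ s_n² f₀ dμ = 1 for all n, dominated by a common function S with ∫ S² f₀ dμ < ∞. Then it is impossible that ∫ (max(−s_n,0))² f₀ dμ → 0. -/
open MeasureTheory

private lemma aux_tendsto_zero (a : ℕ → ℝ) (ha : ∀ n, 0 ≤ a n)
    (h : ∀ ε : ℝ, 0 < ε → ∃ b : ℕ → ℝ, Filter.Tendsto b Filter.atTop (nhds 0) ∧
      ∀ n, a n ≤ ε + b n) :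
    Filter.Tendsto a Filter.atTop (nhds 0) := by
  rw [Metric.tendsto_atTop]
  intro ε hε
  obtain ⟨b, hb, hab⟩ := h (ε / 3) (by linarith)
  rw [Metric.tendsto_atTop] at hb
  obtain ⟨N, hN⟩ := hb (ε / 3) (by linarith)
  refine ⟨N, fun n hn => ?_⟩
  have h1 := ha n
  have h2 := hab n
  have h3 := hN n hn
  rw [Real.dist_eq, sub_zero] at h3 ⊢
  rw [abs_lt] at h3
  rw [abs_of_nonneg h1]
  linarith

theorem stmt_8 {α : Type*} [MeasurableSpace α] (μ : Measure α)
    (f₀ : α → ℝ) (hf₀m : Measurable f₀) (hf₀ : ∀ᵐ x ∂μ, 0 ≤ f₀ x)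
    (hf₀1 : ∫ x, f₀ x ∂μ = 1)
    (s : ℕ → α → ℝ) (hsm : ∀ n, Measurable (s n))
    (S : α → ℝ) (hS : ∀ n x, |s n x| ≤ S x)
    (hSint : Integrable (fun x => (S x) ^ 2 * f₀ x) μ)
    (hmean : ∀ n, ∫ x, s n x * f₀ x ∂μ = 0)
    (hvar : ∀ n, ∫ x, (s n x) ^ 2 * f₀ x ∂μ = 1) :
    ¬ Filter.Tendsto (fun n => ∫ x, (max (-(s n x)) 0) ^ 2 * f₀ x ∂μ)
      Filter.atTop (nhds 0) := by
  intro h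
  have hS0 : ∀ x, 0 ≤ S x := fun x => (abs_nonneg _).trans (hS 0 x)
  have hf0int : Integrable f₀ μ := by
    by_contra hc
    rw [integral_undef hc] at hf₀1
    exact one_ne_zero hf₀1.symm
  have hboundint : Integrable (fun x => S x ^ 2 * f₀ x + f₀ x) μ := hSint.add hf0int
  -- generic integrability of g * f₀ for |g| ≤ S, g measurable
  have key : ∀ g : α → ℝ, Measurable g → (∀ x, |g x| ≤ S x) →
      Integrable (fun x => g x * f₀ x) μ := by
    intro g hg hgS
    refine Integrable.mono' hboundint ((hg.mul hf₀m).aestronglyMeasurable) ?_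
    filter_upwards [hf₀] with x hx
    have h1 := hgS x
    have h2 := hS0 x
    have h3 : ‖g x * f₀ x‖ = |g x| * f₀ x := by
      rw [norm_mul, Real.norm_eq_abs, Real.norm_eq_abs, abs_of_nonneg hx]
    rw [h3]
    nlinarith [abs_nonneg (g x), sq_nonneg (S x - 1)]
  have key2 : ∀ g : α → ℝ, Measurable g → (∀ x, |g x| ≤ S x) →
      Integrable (fun x => g x ^ 2 * f₀ x) μ := by
    intro g hg hgS
    refine Integrable.mono' hSint (((hg.pow_const 2).mul hf₀m).aestronglyMeasurable) ?_
    filter_upwards [hf₀] with x hx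
    have h1 := hgS x
    have h3 : ‖g x ^ 2 * f₀ x‖ = g x ^ 2 * f₀ x := by
      rw [Real.norm_eq_abs, abs_of_nonneg (mul_nonneg (sq_nonneg _) hx)]
    rw [h3]
    have : g x ^ 2 ≤ S x ^ 2 := by
      rw [← sq_abs]
      exact pow_le_pow_left₀ (abs_nonneg _) h1 2
    nlinarith
  -- positive and negative parts
  have hPm : ∀ n, Measurable (fun x => max (s n x) 0) := fun n =>
    (hsm n).max measurable_const
  have hNm : ∀ n, Measurable (fun x => max (-(s n x)) 0) := fun n =>
    (hsm n).neg.max measurable_const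
  have hPS : ∀ n x, |max (s n x) 0| ≤ S x := by
    intro n x
    rw [abs_of_nonneg (le_max_right _ _)]
    exact max_le ((le_abs_self _).trans (hS n x)) (hS0 x)
  have hNS : ∀ n x, |max (-(s n x)) 0| ≤ S x := by
    intro n x
    rw [abs_of_nonneg (le_max_right _ _)]
    exact max_le ((neg_le_abs _).trans (hS n x)) (hS0 x)
  have hPint : ∀ n, Integrable (fun x => max (s n x) 0 * f₀ x) μ := fun n =>
    key _ (hPm n) (hPS n)
  have hNint : ∀ n, Integrable (fun x => max (-(s n x)) 0 * f₀ x) μ := fun n =>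
    key _ (hNm n) (hNS n)
  have hP2int : ∀ n, Integrable (fun x => max (s n x) 0 ^ 2 * f₀ x) μ := fun n =>
    key2 _ (hPm n) (hPS n)
  have hN2int : ∀ n, Integrable (fun x => max (-(s n x)) 0 ^ 2 * f₀ x) μ := fun n =>
    key2 _ (hNm n) (hNS n)
  -- step 1 : ∫ P f₀ = ∫ N f₀
  have hPN : ∀ n, ∫ x, max (s n x) 0 * f₀ x ∂μ = ∫ x, max (-(s n x)) 0 * f₀ x ∂μ := by
    intro n
    have hsub := integral_sub (hPint n) (hNint n)
    have heq : (fun x => max (s n x) 0 * f₀ x - max (-(s n x)) 0 * f₀ x)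
        = fun x => s n x * f₀ x := by
      funext x
      rcases le_total (s n x) 0 with hc | hc
      · rw [max_eq_right hc, max_eq_left (neg_nonneg.mpr hc)]; ring
      · rw [max_eq_left hc, max_eq_right (neg_nonpos.mpr hc)]; ring
    rw [heq, hmean n] at hsub
    linarith
  -- nonnegativity of various integrals
  have hNnon : ∀ n, 0 ≤ ∫ x, max (-(s n x)) 0 * f₀ x ∂μ := by
    intro n
    refine integral_nonneg_of_ae ?_
    filter_upwards [hf₀] with x hx
    exact mul_nonneg (le_max_right _ _) hx
  have hP2non : ∀ n, 0 ≤ ∫ x, max (s n x) 0 ^ 2 * f₀ x ∂μ := by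
    intro n
    refine integral_nonneg_of_ae ?_
    filter_upwards [hf₀] with x hx
    exact mul_nonneg (sq_nonneg _) hx
  -- step 2 : ∫ N f₀ → 0
  have hNto0 : Filter.Tendsto (fun n => ∫ x, max (-(s n x)) 0 * f₀ x ∂μ)
      Filter.atTop (nhds 0) := by
    refine aux_tendsto_zero _ hNnon ?_
    intro ε hε
    refine ⟨fun n => ε⁻¹ * ∫ x, (max (-(s n x)) 0) ^ 2 * f₀ x ∂μ, ?_, ?_⟩
    · have := h.const_mul ε⁻¹
      simpa using this
    · intro n
      have hmono : ∫ x, max (-(s n x)) 0 * f₀ x ∂μ ≤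
          ∫ x, (ε * f₀ x + ε⁻¹ * ((max (-(s n x)) 0) ^ 2 * f₀ x)) ∂μ := by
        refine integral_mono_ae (hNint n)
          ((hf0int.const_mul ε).add ((hN2int n).const_mul ε⁻¹)) ?_
        filter_upwards [hf₀] with x hx
        have hN0 : 0 ≤ max (-(s n x)) 0 := le_max_right _ _
        rcases le_or_gt (max (-(s n x)) 0) ε with hc | hc
        · nlinarith [mul_nonneg (sub_nonneg.mpr hc) hx,
            mul_nonneg (mul_nonneg (inv_pos.mpr hε).le (sq_nonneg (max (-(s n x)) 0))) hx]
        · have hNle : max (-(s n x)) 0 ≤ ε⁻¹ * (max (-(s n x)) 0) ^ 2 := by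
            have h1 : ε * max (-(s n x)) 0 ≤ (max (-(s n x)) 0) ^ 2 := by nlinarith
            calc max (-(s n x)) 0 = ε⁻¹ * (ε * max (-(s n x)) 0) := by
                  field_simp
              _ ≤ ε⁻¹ * (max (-(s n x)) 0) ^ 2 :=
                  mul_le_mul_of_nonneg_left h1 (inv_pos.mpr hε).le
          nlinarith [mul_le_mul_of_nonneg_right hNle hx, mul_nonneg hε.le hx]
      rw [integral_add (hf0int.const_mul ε) ((hN2int n).const_mul ε⁻¹),
        integral_const_mul, integral_const_mul, hf₀1, mul_one] at hmono
      show _ ≤ ε + ε⁻¹ * _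
      linarith
  -- step 3 : ∫ P f₀ → 0
  have hPto0 : Filter.Tendsto (fun n => ∫ x, max (s n x) 0 * f₀ x ∂μ)
      Filter.atTop (nhds 0) := by
    refine hNto0.congr fun n => (hPN n).symm
  -- step 4 : truncation
  have hFint : ∀ M : ℕ, Integrable
      (fun x => max (S x ^ 2 * f₀ x - (M : ℝ) ^ 2 * f₀ x) 0) μ := by
    intro M
    refine Integrable.mono' hSint
      ((hSint.aestronglyMeasurable.sub
        (hf₀m.const_mul ((M : ℝ) ^ 2)).aestronglyMeasurable).sup
        aestronglyMeasurable_const) ?_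
    filter_upwards [hf₀] with x hx
    rw [Real.norm_eq_abs, abs_of_nonneg (le_max_right _ _)]
    refine max_le ?_ (mul_nonneg (sq_nonneg _) hx)
    nlinarith [mul_nonneg (sq_nonneg (M : ℝ)) hx]
  have hTto0 : Filter.Tendsto
      (fun M : ℕ => ∫ x, max (S x ^ 2 * f₀ x - (M : ℝ) ^ 2 * f₀ x) 0 ∂μ)
      Filter.atTop (nhds 0) := by
    have := tendsto_integral_of_dominated_convergence
      (F := fun M : ℕ => fun x => max (S x ^ 2 * f₀ x - (M : ℝ) ^ 2 * f₀ x) 0)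
      (f := fun _ => (0 : ℝ)) (bound := fun x => S x ^ 2 * f₀ x)
      (fun M => (hFint M).aestronglyMeasurable) hSint
      (by
        intro M
        filter_upwards [hf₀] with x hx
        rw [Real.norm_eq_abs, abs_of_nonneg (le_max_right _ _)]
        refine max_le ?_ (mul_nonneg (sq_nonneg _) hx)
        nlinarith [mul_nonneg (sq_nonneg (M : ℝ)) hx])
      (by
        filter_upwards [hf₀] with x hx
        refine Filter.Tendsto.congr' ?_ tendsto_const_nhds
        filter_upwards [Filter.eventually_ge_atTop ⌈S x⌉₊] with M hM
        have hSM : S x ≤ (M : ℝ) := (Nat.le_ceil _).trans (by exact_mod_cast hM)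
        have : S x ^ 2 * f₀ x - (M : ℝ) ^ 2 * f₀ x ≤ 0 := by
          nlinarith [mul_nonneg (mul_nonneg (sub_nonneg.mpr hSM)
            (by linarith [hS0 x] : (0:ℝ) ≤ (M : ℝ) + S x)) hx]
        exact (max_eq_right this).symm)
    simpa using this
  have hP2to0 : Filter.Tendsto (fun n => ∫ x, max (s n x) 0 ^ 2 * f₀ x ∂μ)
      Filter.atTop (nhds 0) := by
    refine aux_tendsto_zero _ hP2non ?_
    intro ε hε
    obtain ⟨M, hM⟩ := (hTto0.eventually_lt_const hε).exists
    refine ⟨fun n => (M : ℝ) * ∫ x, max (s n x) 0 * f₀ x ∂μ, ?_, ?_⟩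
    · have := hPto0.const_mul (M : ℝ)
      simpa using this
    · intro n
      have hmono : ∫ x, max (s n x) 0 ^ 2 * f₀ x ∂μ ≤
          ∫ x, ((M : ℝ) * (max (s n x) 0 * f₀ x)
            + max (S x ^ 2 * f₀ x - (M : ℝ) ^ 2 * f₀ x) 0) ∂μ := by
        refine integral_mono_ae (hP2int n)
          (((hPint n).const_mul (M : ℝ)).add (hFint M)) ?_
        filter_upwards [hf₀] with x hx
        have hp0 : 0 ≤ max (s n x) 0 := le_max_right _ _
        have hpS : max (s n x) 0 ≤ S x := by
          have := hPS n x; rwa [abs_of_nonneg hp0] at this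
        have hm0 : (0 : ℝ) ≤ (M : ℝ) := Nat.cast_nonneg _
        have hF1 : S x ^ 2 * f₀ x - (M : ℝ) ^ 2 * f₀ x ≤
            max (S x ^ 2 * f₀ x - (M : ℝ) ^ 2 * f₀ x) 0 := le_max_left _ _
        have hF2 : (0 : ℝ) ≤ max (S x ^ 2 * f₀ x - (M : ℝ) ^ 2 * f₀ x) 0 :=
          le_max_right _ _
        rcases le_or_gt (max (s n x) 0) (M : ℝ) with hc | hc
        · nlinarith [mul_nonneg (mul_nonneg (sub_nonneg.mpr hc) hp0) hx]
        · nlinarith [mul_nonneg (mul_nonneg hm0 (sub_nonneg.mpr hc.le)) hx,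
            mul_nonneg (mul_nonneg (sub_nonneg.mpr hpS) (by linarith : (0:ℝ) ≤ S x + max (s n x) 0)) hx]
      rw [integral_add ((hPint n).const_mul (M : ℝ)) (hFint M),
        integral_const_mul] at hmono
      show _ ≤ ε + (M : ℝ) * _
      linarith
  -- step 5 : contradiction
  have hsum : ∀ n, (∫ x, max (s n x) 0 ^ 2 * f₀ x ∂μ)
      + (∫ x, (max (-(s n x)) 0) ^ 2 * f₀ x ∂μ) = 1 := by
    intro n
    rw [← integral_add (hP2int n) (hN2int n), ← hvar n]
    congr 1
    funext x
    rcases le_total (s n x) 0 with hc | hc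
    · rw [max_eq_right hc, max_eq_left (neg_nonneg.mpr hc)]; ring
    · rw [max_eq_left hc, max_eq_right (neg_nonpos.mpr hc)]; ring
  have hfinal := hP2to0.add h
  rw [add_zero] at hfinal
  have : Filter.Tendsto (fun _ : ℕ => (1 : ℝ)) Filter.atTop (nhds 0) :=
    hfinal.congr fun n => hsum n
  exact zero_ne_one (tendsto_nhds_unique this tendsto_const_nhds)
end
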